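/- For every m ≥ 3, an Apollonian network T contains no subgraph isomorphic to the complete bipartite graph K_{2,2m-1} in which the two vertices of the partition set of size two are not adjacent in T. -/

import Mathlib

open SimpleGraph

/-- The complete graph `K4` on the vertices `{0,1,2,3}` of `ℕ`. -/
def K4n : SimpleGraph ℕ where
  Adj x y := x ≠ y ∧ x < 4 ∧ y < 4
  symm := ⟨fun _ _ h => ⟨h.1.symm, h.2.2, h.2.1⟩⟩
  loopless := ⟨fun _ h => h.1 rfl⟩

/-- Add a new apex vertex `v` joined to the three vertices `a`, `b`, `c`. -/
def addApex (G : SimpleGraph ℕ) (v a b c : ℕ) : SimpleGraph ℕ :=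
  G ⊔ SimpleGraph.fromEdgeSet {s(v, a), s(v, b), s(v, c)}

/-- `ApollonianF G Fs` : `G` is an Apollonian network with set of (triangular) faces `Fs`,
built from `K4` by recursively subdividing a triangular face. -/
inductive ApollonianF : SimpleGraph ℕ → Set (Finset ℕ) → Prop
  | base : ApollonianF K4n {{0, 1, 2}, {0, 1, 3}, {0, 2, 3}, {1, 2, 3}}
  | subdivide (G : SimpleGraph ℕ) (Fs : Set (Finset ℕ)) (a b c v : ℕ) :
      ApollonianF G Fs → ({a, b, c} : Finset ℕ) ∈ Fs →
      (∀ y, ¬ G.Adj v y) →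
      ApollonianF (addApex G v a b c)
        ((Fs \ {({a, b, c} : Finset ℕ)}) ∪ {{v, a, b}, {v, a, c}, {v, b, c}})

/-- A graph (on vertex set its support) is an Apollonian network. -/
def IsApollonian (G : SimpleGraph ℕ) : Prop := ∃ Fs, ApollonianF G Fs

/-- The triangles (sets of three pairwise adjacent vertices) of `G`. -/
def triangleSet (G : SimpleGraph ℕ) : Set (Finset ℕ) :=
  {t | ∃ a b c : ℕ, t = {a, b, c} ∧ G.Adj a b ∧ G.Adj a c ∧ G.Adj b c}

/-- A triangle is separating if deleting its vertices disconnects the graph. -/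
def IsSeparatingTriangle (G : SimpleGraph ℕ) (t : Finset ℕ) : Prop :=
  t ∈ triangleSet G ∧ ¬ (G.induce (G.support \ ↑t)).Connected

/-- `G` is (isomorphic to) the complete graph on four vertices. -/
def IsK4Graph (G : SimpleGraph ℕ) : Prop :=
  ∃ s : Finset ℕ, ↑s = G.support ∧ s.card = 4 ∧ ∀ a ∈ s, ∀ b ∈ s, a ≠ b → G.Adj a b

/-- Delete the vertex `v` (and all incident edges). -/
def deleteVertex (G : SimpleGraph ℕ) (v : ℕ) : SimpleGraph ℕ where
  Adj x y := G.Adj x y ∧ x ≠ v ∧ y ≠ v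
  symm := ⟨fun _ _ h => ⟨h.1.symm, h.2.2, h.2.1⟩⟩
  loopless := ⟨fun x h => G.loopless.1 x h.1⟩

/-!
Induction along the construction shows that two distinct non-adjacent vertices of an Apollonian
network have at most three common neighbours. In `K4` there is no such pair. A new apex `v` has
only the three vertices of its face as neighbours, and `v` is a common neighbour of an old pair
only if both lie on the subdivided face; faces are triangles, so such a pair is adjacent. Since
`2m - 1 ≥ 5` for `m ≥ 3`, no `K_{2,2m-1}` with non-adjacent vertices on the side of size two fits.
-/

lemma addApex_adj {G : SimpleGraph ℕ} {v a b c x y : ℕ} :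
    (addApex G v a b c).Adj x y ↔ G.Adj x y ∨ (x ≠ y ∧
      ((x = v ∧ (y = a ∨ y = b ∨ y = c)) ∨ (y = v ∧ (x = a ∨ x = b ∨ x = c)))) := by
  simp only [addApex, sup_adj, fromEdgeSet_adj, Set.mem_insert_iff, Set.mem_singleton_iff,
    Sym2.eq_iff]
  tauto

lemma addApex_adj_of_ne {G : SimpleGraph ℕ} {v a b c x y : ℕ} (hx : x ≠ v) (hy : y ≠ v) :
    (addApex G v a b c).Adj x y ↔ G.Adj x y := by
  rw [addApex_adj]
  grind

lemma neighborSet_addApex_subset {G : SimpleGraph ℕ} {v a b c : ℕ} (hv : ∀ y, ¬ G.Adj v y) :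
    (addApex G v a b c).neighborSet v ⊆ {a, b, c} := by
  intro y hy
  rw [mem_neighborSet, addApex_adj] at hy
  have := hv y
  simp only [Set.mem_insert_iff, Set.mem_singleton_iff]
  grind

lemma isClique_insert_addApex {G : SimpleGraph ℕ} {v a b c : ℕ}
    (habc : G.IsClique ({a, b, c} : Set ℕ)) :
    (addApex G v a b c).IsClique ({v, a, b, c} : Set ℕ) :=
  (habc.mono le_sup_left).insert fun _ hy hvy => addApex_adj.2 (Or.inr ⟨hvy, Or.inl ⟨rfl, hy⟩⟩)

lemma ApollonianF.isClique_of_mem {G : SimpleGraph ℕ} {Fs : Set (Finset ℕ)}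
    (h : ApollonianF G Fs) {t : Finset ℕ} (ht : t ∈ Fs) : G.IsClique (t : Set ℕ) := by
  induction h generalizing t with
  | base =>
    simp only [Set.mem_insert_iff, Set.mem_singleton_iff] at ht
    rcases ht with rfl | rfl | rfl | rfl <;>
      · intro x hx y hy hxy
        simp only [Finset.coe_insert, Finset.coe_singleton, Set.mem_insert_iff,
          Set.mem_singleton_iff] at hx hy
        exact ⟨hxy, by omega, by omega⟩
  | subdivide G Fs a b c v _ hface _ ih =>
    have hclique := isClique_insert_addApex (v := v) (by simpa using ih hface)
    simp only [Set.mem_union, Set.mem_sdiff, Set.mem_insert_iff, Set.mem_singleton_iff] at ht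
    rcases ht with ⟨htF, -⟩ | rfl | rfl | rfl
    · exact (ih htF).mono le_sup_left
    all_goals
      refine hclique.subset fun x hx => ?_
      simp only [Finset.coe_insert, Finset.coe_singleton, Set.mem_insert_iff,
        Set.mem_singleton_iff] at hx ⊢
      tauto

lemma encard_neighborSet_addApex_le {G : SimpleGraph ℕ} {v a b c : ℕ}
    (hv : ∀ y, ¬ G.Adj v y) : ((addApex G v a b c).neighborSet v).encard ≤ 3 := by
  refine (Set.encard_le_encard (neighborSet_addApex_subset hv)).trans ?_
  grw [Set.encard_insert_le, Set.encard_insert_le, Set.encard_singleton]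
  norm_num

theorem ApollonianF.encard_commonNeighbors_le {G : SimpleGraph ℕ} {Fs : Set (Finset ℕ)}
    (h : ApollonianF G Fs) {x y : ℕ} (hxy : x ≠ y) (hadj : ¬ G.Adj x y) :
    (G.commonNeighbors x y).encard ≤ 3 := by
  induction h generalizing x y with
  | base =>
    suffices K4n.commonNeighbors x y = ∅ by simp [this]
    refine Set.eq_empty_of_forall_notMem fun w ⟨hxw, hyw⟩ => hadj ?_
    exact ⟨hxy, hxw.2.1, hyw.2.1⟩
  | subdivide G Fs a b c v hG hface hv ih =>
    by_cases hxv : x = v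
    · subst hxv
      exact (Set.encard_le_encard (commonNeighbors_subset_neighborSet_left _ _ _)).trans
        (encard_neighborSet_addApex_le hv)
    by_cases hyv : y = v
    · subst hyv
      exact (Set.encard_le_encard (commonNeighbors_subset_neighborSet_right _ _ _)).trans
        (encard_neighborSet_addApex_le hv)
    have hGadj : ¬ G.Adj x y := fun h => hadj ((addApex_adj_of_ne hxv hyv).2 h)
    have hv_notMem : v ∉ (addApex G v a b c).commonNeighbors x y := by
      rintro ⟨hvx, hvy⟩
      have hx := neighborSet_addApex_subset hv (hvx.symm : (addApex G v a b c).Adj v x)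
      have hy := neighborSet_addApex_subset hv (hvy.symm : (addApex G v a b c).Adj v y)
      exact hGadj (hG.isClique_of_mem hface (by simpa using hx) (by simpa using hy) hxy)
    refine (Set.encard_le_encard fun w hw => ?_).trans (ih hxy hGadj)
    have hwv : w ≠ v := fun h => hv_notMem (h ▸ hw)
    exact ⟨(addApex_adj_of_ne hxv hwv).1 hw.1, (addApex_adj_of_ne hyv hwv).1 hw.2⟩

/-- For `m ≥ 3`, an Apollonian network `T` contains no subgraph
isomorphic to `K_{2,2m-1}` in which the two vertices of the partition set of size two
are not adjacent in `T`. -/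
theorem stmt_3 (T : SimpleGraph ℕ) (hT : IsApollonian T) (m : ℕ) (hm : 3 ≤ m) :
    ¬ ∃ (a b : ℕ) (W : Finset ℕ), a ≠ b ∧ ¬ T.Adj a b ∧
      W.card = 2 * m - 1 ∧ a ∉ W ∧ b ∉ W ∧
      ∀ x ∈ W, T.Adj a x ∧ T.Adj b x := by
  rintro ⟨a, b, W, hab, hadj, hcard, -, -, hW⟩
  obtain ⟨Fs, hF⟩ := hT
  have hle : (W.card : ℕ∞) ≤ 3 :=
    calc (W.card : ℕ∞) = (W : Set ℕ).encard := (Set.encard_coe_eq_coe_finsetCard W).symm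
      _ ≤ (T.commonNeighbors a b).encard := Set.encard_le_encard fun w hw => hW w hw
      _ ≤ 3 := hF.encard_commonNeighbors_le hab hadj
  have : W.card ≤ 3 := by exact_mod_cast hle
  omega
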